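/- arXiv:1212.5960 — 2 statements merged into one kernel-verified Lean document; each statement's English description precedes it below -/
import Mathlib

section
/- Let G be a factorizable graph, X an odd-maximal barrier of G, D_1, …, D_k the DM-components of H_X(G), and D̂_1, …, D̂_k their expansions. Then: (i) the sets V(D̂_1), …, V(D̂_k) form a partition of X ∪ D_X; (ii) each V(D̂_i) is separating, and hence D̂_i is factorizable; (iii) X ∩ V(D̂_i) is an odd-maximal barrier of D̂_i; and (iv) H_{X ∩ V(D̂_i)}(D̂_i) is isomorphic to D_i, for each i = 1, …, k. -/
open SimpleGraph

section Defs

variable {V : Type*} {W : Type*}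

/-- A graph is factorizable if it has a perfect matching. -/
def Factorizable (G : SimpleGraph V) : Prop :=
  ∃ M : SimpleGraph.Subgraph G, M.IsPerfectMatching

/-- An edge is allowed if some perfect matching contains it. -/
def Allowed (G : SimpleGraph V) (e : Sym2 V) : Prop :=
  ∃ M : SimpleGraph.Subgraph G, M.IsPerfectMatching ∧ e ∈ M.edgeSet

/-- The spanning subgraph formed by the allowed edges. -/
def allowedSubgraph (G : SimpleGraph V) : SimpleGraph V :=
  SimpleGraph.fromEdgeSet {e | e ∈ G.edgeSet ∧ Allowed G e}

/-- `u` and `v` lie in the same factor-component of `G`. -/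
def SameFC (G : SimpleGraph V) (u v : V) : Prop :=
  (allowedSubgraph G).Reachable u v

/-- `C` is the vertex set of a factor-component of `G`. -/
def IsFactorComponent (G : SimpleGraph V) (C : Set V) : Prop :=
  ∃ v : V, C = {w | SameFC G v w}

/-- Edges alternate along a list: the `i`-th edge lies in `F` iff `i` is even. -/
def IsAltList (F : Set (Sym2 V)) (l : List (Sym2 V)) : Prop :=
  ∀ (i : ℕ) (h : i < l.length), (l.get ⟨i, h⟩ ∈ F ↔ Even i)

/-- An `M`-saturated path: odd length, `M ∩ E(P)` a perfect matching of `P`. -/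
def IsSaturatedPath {G : SimpleGraph V} (F : Set (Sym2 V)) {u v : V}
    (p : G.Walk u v) : Prop :=
  p.IsPath ∧ Odd p.length ∧ IsAltList F p.edges

/-- An `M`-balanced path from `u` to `v`: even length, `M ∩ E(P)` a near-perfect
matching of `P` exposing only `v`. -/
def IsBalancedPath {G : SimpleGraph V} (F : Set (Sym2 V)) {u v : V}
    (p : G.Walk u v) : Prop :=
  p.IsPath ∧ Even p.length ∧ IsAltList F p.edges

/-- The number of odd components of `G - X`. -/
noncomputable def qG (G : SimpleGraph V) (X : Set V) : ℕ :=
  {c : (G.induce Xᶜ).ConnectedComponent | Odd c.supp.ncard}.ncard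

/-- The set of vertices contained in odd components of `G - X`. -/
def DX (G : SimpleGraph V) (X : Set V) : Set V :=
  {v | ∃ h : v ∈ Xᶜ, Odd ((G.induce Xᶜ).connectedComponentMk ⟨v, h⟩).supp.ncard}

/-- The set of vertices contained in even components of `G - X`. -/
def CX (G : SimpleGraph V) (X : Set V) : Set V := (X ∪ DX G X)ᶜ

/-- A barrier of a factorizable graph: `q_G(X) = |X|`. -/
def IsBarrier (G : SimpleGraph V) (X : Set V) : Prop := qG G X = X.ncard

/-- An odd-maximal barrier: no nonempty `Y ⊆ D_X` with `X ∪ Y` a barrier. -/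
def IsOddMaximalBarrier (G : SimpleGraph V) (X : Set V) : Prop :=
  IsBarrier G X ∧ ∀ Y ⊆ DX G X, Y.Nonempty → ¬ IsBarrier G (X ∪ Y)

/-- Kita's equivalence relation `u ∼_G v`. -/
def simG (G : SimpleGraph V) (u v : V) : Prop :=
  SameFC G u v ∧ (u = v ∨ ¬ Factorizable (G.induce {w : V | w ≠ u ∧ w ≠ v}))

/-- `S` is a class of the generalized canonical partition `P(G)`. -/
def IsCanonicalClass (G : SimpleGraph V) (S : Set V) : Prop :=
  ∃ v : V, S = {u | simG G u v}

/-- `S` is a member of `P_G(H)` where `C = V(H)`. -/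
def IsClassOf (G : SimpleGraph V) (C S : Set V) : Prop :=
  IsCanonicalClass G S ∧ S ⊆ C

/-- A separating set meets each factor-component fully or not at all. -/
def IsSeparating (G : SimpleGraph V) (X : Set V) : Prop :=
  ∀ C : Set V, IsFactorComponent G C → C ⊆ X ∨ Disjoint C X

/-- Factor-critical: deleting any vertex leaves a factorizable (or empty) graph. -/
def FactorCritical (H : SimpleGraph W) : Prop :=
  ∀ v : W, Factorizable (H.induce {w : W | w ≠ v})

/-- The graph `G[X]/C`: induced on `X`, with `C` contracted to a single
vertex (`none`). -/
def contractSet (G : SimpleGraph V) (X C : Set V) :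
    SimpleGraph (Option {x : V // x ∈ X \ C}) :=
  SimpleGraph.fromRel (fun a b =>
    match a, b with
    | some x, some y => G.Adj x.1 y.1
    | some x, none => ∃ c ∈ C ∩ X, G.Adj x.1 c
    | none, _ => False)

/-- `X` is a critical-inducing set for the factor-component `C1` to `C2`. -/
def CriticalInducing (G : SimpleGraph V) (C1 C2 X : Set V) : Prop :=
  IsSeparating G X ∧ C1 ∪ C2 ⊆ X ∧ FactorCritical (contractSet G X C1)

/-- Kita's partial order `C1 ◁ C2` on factor-components. -/
def compOrder (G : SimpleGraph V) (C1 C2 : Set V) : Prop :=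
  ∃ X : Set V, CriticalInducing G C1 C2 X

/-- `V↑*(H)`: union of the vertex sets of all factor-components above `C`. -/
def upStar (G : SimpleGraph V) (C : Set V) : Set V :=
  {v | ∃ C' : Set V, IsFactorComponent G C' ∧ compOrder G C C' ∧ v ∈ C'}

/-- `K` is (the vertex set of) a connected component of `G[U]`. -/
def IsComponentOf (G : SimpleGraph V) (U K : Set V) : Prop :=
  ∃ (v : V) (hv : v ∈ U),
    K = {w | ∃ hw : w ∈ U, (G.induce U).Reachable ⟨v, hv⟩ ⟨w, hw⟩}

/-- `V↑(S)` for a class `S ∈ P_G(H)` where `C = V(H)`. -/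
def upOfClass (G : SimpleGraph V) (C S : Set V) : Set V :=
  {v | ∃ C' : Set V, IsFactorComponent G C' ∧ C' ≠ C ∧ compOrder G C C' ∧ v ∈ C' ∧
    ∃ K : Set V, IsComponentOf G (upStar G C \ C) K ∧ C' ⊆ K ∧
      ∀ w ∈ C, (∃ k ∈ K, G.Adj k w) → w ∈ S}

/-- `V↑*(S) = V↑(S) ∪ S`. -/
def upStarOfClass (G : SimpleGraph V) (C S : Set V) : Set V := upOfClass G C S ∪ S

/-- The odd components of `G - X`, as a type. -/
abbrev OddCompT (G : SimpleGraph V) (X : Set V) :=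
  {c : (G.induce Xᶜ).ConnectedComponent // Odd c.supp.ncard}

/-- Vertices of `H_X(G)`: vertices of `X` together with contracted odd components. -/
abbrev HVert (G : SimpleGraph V) (X : Set V) := {x : V // x ∈ X} ⊕ OddCompT G X

/-- The bipartite graph `H_X(G)`. -/
def HGraph (G : SimpleGraph V) (X : Set V) : SimpleGraph (HVert G X) :=
  SimpleGraph.fromRel (fun a b =>
    ∃ (x : {x : V // x ∈ X}) (c : OddCompT G X) (y : (Xᶜ : Set V)),
      a = Sum.inl x ∧ b = Sum.inr c ∧
      (G.induce Xᶜ).connectedComponentMk y = c.1 ∧ G.Adj x.1 y.1)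

/-- The edge set of `H_X(G)` corresponding to `M ∩ δ(X)`. -/
def projEdges (G : SimpleGraph V) (X : Set V) (M : SimpleGraph.Subgraph G) :
    Set (Sym2 (HVert G X)) :=
  {e | ∃ (x : {x : V // x ∈ X}) (c : OddCompT G X) (y : (Xᶜ : Set V)),
    (G.induce Xᶜ).connectedComponentMk y = c.1 ∧ s(x.1, y.1) ∈ M.edgeSet ∧
    e = s(Sum.inl x, Sum.inr c)}

/-- The projection of a vertex of `G` to `H_X(G)` (`none` on `C_X`). -/
noncomputable def projV (G : SimpleGraph V) (X : Set V) (v : V) :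
    Option (HVert G X) := by
  classical
  exact if h : v ∈ X then some (Sum.inl ⟨v, h⟩)
  else if ho : Odd ((G.induce Xᶜ).connectedComponentMk ⟨v, h⟩).supp.ncard then
    some (Sum.inr ⟨(G.induce Xᶜ).connectedComponentMk ⟨v, h⟩, ho⟩)
  else none

/-- The support of the contraction `P/K_1/⋯/K_l` of a path of `G` to `H_X(G)`. -/
noncomputable def contractSupport (G : SimpleGraph V) (X : Set V) (l : List V) :
    List (HVert G X) := by
  classical
  exact List.destutter (· ≠ ·) ((l.map (projV G X)).reduceOption)

/-- One step of the Dulmage–Mendelsohn relation with respect to the color class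
`A`: some edge joins `B ∩ V(c)` to `A ∩ V(d)`. -/
def dmStep (H : SimpleGraph W) (A : Set W)
    (c d : (allowedSubgraph H).ConnectedComponent) : Prop :=
  ∃ b a : W, b ∉ A ∧ a ∈ A ∧ b ∈ c.supp ∧ a ∈ d.supp ∧ H.Adj b a

/-- The Dulmage–Mendelsohn order `⪯` with respect to `A`. -/
def dmLE (H : SimpleGraph W) (A : Set W) :
    (allowedSubgraph H).ConnectedComponent →
      (allowedSubgraph H).ConnectedComponent → Prop :=
  Relation.ReflTransGen (dmStep H A)

/-- The vertex set of the expansion of a DM-component `c` of `H_X(G)`. -/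
def expansionVerts (G : SimpleGraph V) (X : Set V)
    (c : (allowedSubgraph (HGraph G X)).ConnectedComponent) : Set V :=
  {v | (∃ h : v ∈ X, Sum.inl ⟨v, h⟩ ∈ c.supp) ∨
       (∃ (h : v ∈ Xᶜ) (ho : Odd ((G.induce Xᶜ).connectedComponentMk ⟨v, h⟩).supp.ncard),
         Sum.inr ⟨(G.induce Xᶜ).connectedComponentMk ⟨v, h⟩, ho⟩ ∈ c.supp)}

/-- A set of edges forms a perfect matching of `H`. -/
def IsPerfectMatchingSet (H : SimpleGraph W) (F : Set (Sym2 W)) : Prop :=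
  F ⊆ H.edgeSet ∧ ∀ w : W, ∃! e : Sym2 W, e ∈ F ∧ w ∈ e

/-- The graph `P − E(H)`: the edges of the path `p` that are not edges of the
induced subgraph `G[C]`. -/
def earGraph (G : SimpleGraph V) (C : Set V) {u v : V} (p : G.Walk u v) :
    SimpleGraph V :=
  SimpleGraph.fromEdgeSet {e | e ∈ p.edges ∧ ¬ ∀ z ∈ e, z ∈ C}

/-- `K` is a connected component of `Q` containing at least one edge. -/
def IsEdgeComponentOf (Q : SimpleGraph V) (K : Set V) : Prop :=
  ∃ a b : V, Q.Adj a b ∧ K = {w | Q.Reachable a w}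

/-- The end vertices of a path-component `K` of `Q` (vertices of degree `≤ 1`). -/
def pathEnds (Q : SimpleGraph V) (K : Set V) : Set V :=
  {z ∈ K | ¬ ∃ w₁ w₂ : V, w₁ ≠ w₂ ∧ Q.Adj z w₁ ∧ Q.Adj z w₂}

/-- The maximum size of a matching of `G`. -/
noncomputable def matchNum (G : SimpleGraph V) : ℕ :=
  sSup {n : ℕ | ∃ M : SimpleGraph.Subgraph G, M.IsMatching ∧ M.edgeSet.ncard = n}

/-- A barrier of a general graph, via the Berge formula. -/
def IsBarrierGen [Fintype V] (G : SimpleGraph V) (X : Set V) : Prop :=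
  qG G X = (Fintype.card V - 2 * matchNum G) + X.ncard

/-- An odd-maximal barrier of a general graph. -/
def IsOddMaximalBarrierGen [Fintype V] (G : SimpleGraph V) (X : Set V) : Prop :=
  IsBarrierGen G X ∧ ∀ Y ⊆ DX G X, Y.Nonempty → ¬ IsBarrierGen G (X ∪ Y)

end Defs

/-!
Fix a perfect matching `M` of `G`. Every odd component of `G - X` has a vertex matched out of
it, necessarily into `X`, and a vertex of `X` has only one partner; as `q_G(X) = |X|`, these
edges give a bijection between `X` and the odd components, i.e. `M ∩ δ(X)` is a perfect
matching of `H_X(G)`. Hence an allowed edge of `G` inside `X ∪ D_X` projects to an allowed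
edge (or a single vertex) of `H_X(G)`, so every factor-component of `G` lies inside one
expansion or misses it: expansions are separating and closed under `M`, hence factorizable.

The odd components of `D̂ - X` are exactly the odd components of `G - X` whose contracted
vertices lie in `D`, and the perfect matching of `H_X(G)` pairs them with `X ∩ V(D)`; so
`X ∩ V(D̂)` is a barrier of `D̂`, and `H_{X ∩ V(D̂)}(D̂) ≅ D`. Finally, for `Y ⊆ V(D̂) \ X`
the graph `G - (X ∪ Y)` is the disjoint union, without edges in between, of the part of
`G - X` outside `D̂` and of `D̂ - (X ∪ Y)`; counting odd components shows that if `X ∪ Y`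
were a barrier of `D̂` it would be a barrier of `G`, contradicting odd-maximality of `X`.
-/

lemma exists_equiv_iff_of_card_eq {α β : Type*} [Finite α] {R : α → β → Prop}
    (hcard : Nat.card β = Nat.card α) (htotal : ∀ b, ∃ a, R a b)
    (hfun : ∀ a b b', R a b → R a b' → b = b') : ∃ e : α ≃ β, ∀ a b, R a b ↔ e a = b := by
  choose f hf using htotal
  have hinj : Function.Injective f := fun b b' h => hfun _ _ _ (hf b) (h ▸ hf b')
  have : Finite β := Finite.of_injective f hinj
  let e := (Equiv.ofBijective f ((Nat.bijective_iff_injective_and_card f).2 ⟨hinj, hcard⟩)).symm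
  have hfe : ∀ a, f (e a) = a := (Equiv.ofBijective f _).apply_symm_apply
  have hRe : ∀ a, R a (e a) := fun a => by simpa only [hfe] using hf (e a)
  exact ⟨e, fun a b => ⟨fun h => hfun a _ _ (hRe a) h, fun h => h ▸ hRe a⟩⟩

lemma exists_equiv_of_range_eq {α β γ : Type*} {f : α → γ} {g : β → γ}
    (hf : Function.Injective f) (hg : Function.Injective g) (h : Set.range f = Set.range g) :
    ∃ e : α ≃ β, ∀ a, g (e a) = f a :=
  ⟨(Equiv.ofInjective f hf).trans ((Equiv.setCongr h).trans (Equiv.ofInjective g hg).symm),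
    fun _ => Equiv.apply_ofInjective_symm hg _⟩

namespace SimpleGraph.Subgraph.IsPerfectMatching

variable {V : Type*} {G : SimpleGraph V} {M : G.Subgraph}

lemma exists_adj_notMem_of_odd_ncard [Finite V] (hM : M.IsPerfectMatching) {A : Set V}
    (hA : Odd A.ncard) : ∃ a ∈ A, ∃ b ∉ A, M.Adj a b := by
  classical
  by_contra! h
  have hm : (M.induce A).IsMatching := by
    intro v hv
    obtain ⟨w, hw, hu⟩ := hM.1 (hM.2 v)
    exact ⟨w, ⟨hv, by_contra fun hwA => h v hv w hwA hw, hw⟩, fun y hy => hu y hy.2.2⟩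
  have : Fintype (M.induce A).verts := Fintype.ofFinite _
  have heven := hm.even_card
  rw [Set.toFinset_card, ← Nat.card_eq_fintype_card, Subgraph.induce_verts,
    Nat.card_coe_set_eq] at heven
  exact Nat.not_even_iff_odd.2 hA heven

lemma allowedSubgraph_adj (hM : M.IsPerfectMatching) {u v : V} (h : M.Adj u v) :
    (allowedSubgraph G).Adj u v := by
  rw [allowedSubgraph, fromEdgeSet_adj]
  exact ⟨⟨M.adj_sub h, M, hM, h⟩, (M.adj_sub h).ne⟩

lemma factorizable_induce (hM : M.IsPerfectMatching) {S : Set V}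
    (hS : ∀ v ∈ S, ∀ w, M.Adj v w → w ∈ S) : Factorizable (G.induce S) := by
  refine ⟨M.comap (Embedding.induce S).toHom, Subgraph.isPerfectMatching_iff.2 fun v => ?_⟩
  obtain ⟨w, hvw, huniq⟩ := hM.1 (hM.2 v)
  exact ⟨⟨w, hS v v.2 w hvw⟩, ⟨M.adj_sub hvw, hvw⟩, fun u hu => Subtype.ext (huniq u hu.2)⟩

end SimpleGraph.Subgraph.IsPerfectMatching

section InducedComponents

variable {V : Type*} {G : SimpleGraph V}

def componentVerts {A : Set V} (c : (G.induce A).ConnectedComponent) : Set V :=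
  Subtype.val '' c.supp

lemma mem_componentVerts {A : Set V} {c : (G.induce A).ConnectedComponent} {v : V} :
    v ∈ componentVerts c ↔ ∃ h : v ∈ A, (G.induce A).connectedComponentMk ⟨v, h⟩ = c := by
  simp [componentVerts]

lemma componentVerts_subset {A : Set V} (c : (G.induce A).ConnectedComponent) :
    componentVerts c ⊆ A := by
  rintro _ ⟨u, -, rfl⟩
  exact u.2

lemma ncard_componentVerts {A : Set V} (c : (G.induce A).ConnectedComponent) :
    (componentVerts c).ncard = c.supp.ncard :=
  Set.ncard_image_of_injective _ Subtype.val_injective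

lemma componentVerts_injective {A : Set V} :
    Function.Injective (componentVerts : (G.induce A).ConnectedComponent → Set V) :=
  fun _ _ h => ConnectedComponent.supp_injective (Set.image_injective.2 Subtype.val_injective h)

lemma mem_componentVerts_of_adj {A : Set V} {c : (G.induce A).ConnectedComponent} {u w : V}
    (hu : u ∈ componentVerts c) (hw : w ∈ A) (huw : G.Adj u w) : w ∈ componentVerts c := by
  obtain ⟨huA, rfl⟩ := mem_componentVerts.1 hu
  exact mem_componentVerts.2 ⟨hw, (ConnectedComponent.connectedComponentMk_eq_of_adj
    (show (G.induce A).Adj ⟨u, huA⟩ ⟨w, hw⟩ from huw)).symm⟩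

lemma componentVerts_connectedComponentMk {A : Set V} (a : A) :
    componentVerts ((G.induce A).connectedComponentMk a) =
      {w | ∃ hw : w ∈ A, (G.induce A).Reachable a ⟨w, hw⟩} := by
  ext w
  simp only [mem_componentVerts, ConnectedComponent.eq, Set.mem_ofPred_eq]
  exact exists_congr fun _ => ⟨Reachable.symm, Reachable.symm⟩

lemma isComponentOf_iff_mem_range {A K : Set V} :
    IsComponentOf G A K ↔
      K ∈ Set.range (componentVerts : (G.induce A).ConnectedComponent → Set V) := by
  constructor
  · rintro ⟨v, hv, rfl⟩
    exact ⟨_, componentVerts_connectedComponentMk ⟨v, hv⟩⟩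
  · rintro ⟨c, rfl⟩
    induction c using ConnectedComponent.ind with
    | h a => exact ⟨a.1, a.2, componentVerts_connectedComponentMk a⟩

lemma IsComponentOf.subset {A K : Set V} (hK : IsComponentOf G A K) : K ⊆ A := by
  obtain ⟨c, rfl⟩ := isComponentOf_iff_mem_range.1 hK
  exact componentVerts_subset c

lemma IsComponentOf.nonempty {A K : Set V} (hK : IsComponentOf G A K) : K.Nonempty := by
  obtain ⟨v, hv, rfl⟩ := hK
  exact ⟨v, hv, Reachable.refl _⟩

lemma mem_of_reachable_induce {A' A : Set V} (hcl : ∀ u ∈ A', ∀ w ∈ A, G.Adj u w → w ∈ A')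
    {u w : A} (h : (G.induce A).Reachable u w) (hu : u.1 ∈ A') : w.1 ∈ A' := by
  obtain ⟨p⟩ := h
  induction p with
  | nil => exact hu
  | cons hadj _ ih => exact ih (hcl _ hu _ (Subtype.property _) hadj)

lemma setOf_reachable_induce_of_closed {A' A : Set V} (hsub : A' ⊆ A)
    (hcl : ∀ u ∈ A', ∀ w ∈ A, G.Adj u w → w ∈ A') {v : V} (hv : v ∈ A') :
    {w | ∃ hw : w ∈ A', (G.induce A').Reachable ⟨v, hv⟩ ⟨w, hw⟩} =
      {w | ∃ hw : w ∈ A, (G.induce A).Reachable ⟨v, hsub hv⟩ ⟨w, hw⟩} := by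
  ext w
  constructor
  · rintro ⟨hw, h⟩
    exact ⟨hsub hw, h.map (G.induceHomOfLE hsub).toHom⟩
  · rintro ⟨hw, ⟨p⟩⟩
    classical
    have hsupp : ∀ x ∈ (p.map (Embedding.induce A).toHom).support, x ∈ A' := by
      intro x hx
      rw [Walk.support_map, List.mem_map] at hx
      obtain ⟨y, hy, rfl⟩ := hx
      exact mem_of_reachable_induce hcl ⟨p.takeUntil y hy⟩ hv
    exact ⟨_, ⟨(p.map (Embedding.induce A).toHom).induce A' hsupp⟩⟩

lemma isComponentOf_iff_of_closed {A' A K : Set V} (hsub : A' ⊆ A)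
    (hcl : ∀ u ∈ A', ∀ w ∈ A, G.Adj u w → w ∈ A') :
    IsComponentOf G A' K ↔ IsComponentOf G A K ∧ K ⊆ A' := by
  constructor
  · rintro ⟨v, hv, rfl⟩
    refine ⟨⟨v, hsub hv, setOf_reachable_induce_of_closed hsub hcl hv⟩, fun w hw => ?_⟩
    exact hw.1
  · rintro ⟨⟨v, hv, rfl⟩, hK⟩
    have hv' : v ∈ A' := hK ⟨hv, Reachable.refl _⟩
    exact ⟨v, hv', (setOf_reachable_induce_of_closed hsub hcl hv').symm⟩

lemma IsComponentOf.subset_of_closed {A' A K : Set V} (hK : IsComponentOf G A K)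
    (hcl : ∀ u ∈ A', ∀ w ∈ A, G.Adj u w → w ∈ A') {v : V} (hvK : v ∈ K) (hv : v ∈ A') :
    K ⊆ A' := by
  obtain ⟨u, hu, rfl⟩ := hK
  obtain ⟨hvA, huv⟩ := hvK
  rintro w ⟨hw, huw⟩
  exact mem_of_reachable_induce hcl (huv.symm.trans huw) hv

lemma isComponentOf_union_iff {P Q K : Set V} (hPQ : ∀ u ∈ P, ∀ w ∈ Q, ¬ G.Adj u w) :
    IsComponentOf G (P ∪ Q) K ↔ IsComponentOf G P K ∨ IsComponentOf G Q K := by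
  have hclP : ∀ u ∈ P, ∀ w ∈ P ∪ Q, G.Adj u w → w ∈ P :=
    fun u hu w hw h => hw.resolve_right fun hwQ => hPQ u hu w hwQ h
  have hclQ : ∀ u ∈ Q, ∀ w ∈ P ∪ Q, G.Adj u w → w ∈ Q :=
    fun u hu w hw h => hw.resolve_left fun hwP => hPQ w hwP u hu h.symm
  rw [isComponentOf_iff_of_closed Set.subset_union_left hclP,
    isComponentOf_iff_of_closed Set.subset_union_right hclQ]
  constructor
  · intro hK
    obtain ⟨v, hv⟩ := hK.nonempty
    rcases hK.subset hv with hvP | hvQ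
    · exact Or.inl ⟨hK, hK.subset_of_closed hclP hv hvP⟩
    · exact Or.inr ⟨hK, hK.subset_of_closed hclQ hv hvQ⟩
  · rintro (⟨hK, -⟩ | ⟨hK, -⟩) <;> exact hK

lemma reachable_induce_induce_iff {E : Set V} {T : Set E} {a b : E} (ha : a ∈ T) (hb : b ∈ T) :
    ((G.induce E).induce T).Reachable ⟨a, ha⟩ ⟨b, hb⟩ ↔
      (G.induce (Subtype.val '' T)).Reachable ⟨a, Set.mem_image_of_mem _ ha⟩
        ⟨b, Set.mem_image_of_mem _ hb⟩ := by
  let φ : (G.induce E).induce T ≃g G.induce (Subtype.val '' T) :=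
    { toEquiv := Equiv.Set.image Subtype.val T Subtype.val_injective
      map_rel_iff' := by simp }
  exact (Iso.reachable_iff (φ := φ)).symm

lemma image_val_setOf_reachable_induce {E : Set V} {T : Set E} {a : E} (ha : a ∈ T) :
    Subtype.val '' {w | ∃ hw : w ∈ T, ((G.induce E).induce T).Reachable ⟨a, ha⟩ ⟨w, hw⟩} =
      {w | ∃ hw : w ∈ Subtype.val '' T,
        (G.induce (Subtype.val '' T)).Reachable ⟨a, Set.mem_image_of_mem _ ha⟩ ⟨w, hw⟩} := by
  ext w
  constructor
  · rintro ⟨w, ⟨hw, h⟩, rfl⟩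
    exact ⟨_, (reachable_induce_induce_iff ha hw).1 h⟩
  · rintro ⟨hw, h⟩
    obtain ⟨w, hw', rfl⟩ := id hw
    exact ⟨w, ⟨hw', (reachable_induce_induce_iff ha hw').2 h⟩, rfl⟩

lemma isComponentOf_induce_iff {E : Set V} {T K : Set E} :
    IsComponentOf (G.induce E) T K ↔ IsComponentOf G (Subtype.val '' T) (Subtype.val '' K) := by
  constructor
  · rintro ⟨a, ha, rfl⟩
    exact ⟨a, Set.mem_image_of_mem _ ha, image_val_setOf_reachable_induce ha⟩
  · rintro ⟨v, hv, hK⟩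
    obtain ⟨a, ha, rfl⟩ := id hv
    exact ⟨a, ha, Set.image_injective.2 Subtype.val_injective
      (hK.trans (image_val_setOf_reachable_induce ha).symm)⟩

end InducedComponents

section OddComponents

variable {V : Type*} {G : SimpleGraph V}

def oddComponentVerts (G : SimpleGraph V) (A : Set V) : Set (Set V) :=
  {K | IsComponentOf G A K ∧ Odd K.ncard}

lemma range_componentVerts_oddCompT (X : Set V) :
    Set.range (fun k : OddCompT G X => componentVerts k.1) = oddComponentVerts G Xᶜ := by
  ext K
  simp only [Set.mem_range, oddComponentVerts, Set.mem_ofPred_eq, isComponentOf_iff_mem_range]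
  constructor
  · rintro ⟨k, rfl⟩
    exact ⟨⟨k.1, rfl⟩, by rw [ncard_componentVerts]; exact k.2⟩
  · rintro ⟨⟨c, rfl⟩, hodd⟩
    exact ⟨⟨c, by rwa [ncard_componentVerts] at hodd⟩, rfl⟩

lemma qG_eq_ncard_range {α : Type*} {X : Set V} {f : OddCompT G X → α}
    (hf : Function.Injective f) : qG G X = (Set.range f).ncard := by
  rw [Set.ncard_range_of_injective hf]
  exact (Nat.card_coe_set_eq _).symm

lemma qG_eq_ncard_oddComponentVerts (X : Set V) : qG G X = (oddComponentVerts G Xᶜ).ncard := by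
  rw [← range_componentVerts_oddCompT]
  exact qG_eq_ncard_range (componentVerts_injective.comp Subtype.val_injective)

lemma oddComponentVerts_induce {E : Set V} (T : Set E) :
    oddComponentVerts G (Subtype.val '' T) =
      Set.image Subtype.val '' oddComponentVerts (G.induce E) T := by
  ext K
  constructor
  · rintro ⟨hK, hodd⟩
    obtain ⟨K', rfl⟩ := Set.subset_range_iff_exists_image_eq.1
      (hK.subset.trans (Set.image_subset_range _ _))
    rw [Set.ncard_image_of_injective _ Subtype.val_injective] at hodd
    exact ⟨K', ⟨isComponentOf_induce_iff.2 hK, hodd⟩, rfl⟩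
  · rintro ⟨K', ⟨hK', hodd⟩, rfl⟩
    exact ⟨isComponentOf_induce_iff.1 hK',
      by rwa [Set.ncard_image_of_injective _ Subtype.val_injective]⟩

lemma range_image_componentVerts_oddCompT_induce (E X : Set V) :
    Set.range (fun d : OddCompT (G.induce E) (Subtype.val ⁻¹' X) =>
      Subtype.val '' componentVerts d.1) = oddComponentVerts G (E ∩ Xᶜ) := by
  rw [Set.range_comp' (Set.image Subtype.val)
      (fun d : OddCompT (G.induce E) _ => componentVerts d.1),
    range_componentVerts_oddCompT, ← oddComponentVerts_induce, ← Set.preimage_compl,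
    Subtype.image_preimage_coe]

lemma qG_induce_preimage (E Z : Set V) :
    qG (G.induce E) (Subtype.val ⁻¹' Z) = (oddComponentVerts G (E ∩ Zᶜ)).ncard := by
  rw [← range_image_componentVerts_oddCompT_induce]
  exact qG_eq_ncard_range ((Set.image_injective.2 Subtype.val_injective).comp
    (componentVerts_injective.comp Subtype.val_injective))

lemma ncard_oddComponentVerts_union [Finite V] {P Q : Set V} (hPQ : Disjoint P Q)
    (hadj : ∀ u ∈ P, ∀ w ∈ Q, ¬ G.Adj u w) :
    (oddComponentVerts G (P ∪ Q)).ncard =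
      (oddComponentVerts G P).ncard + (oddComponentVerts G Q).ncard := by
  have hunion : oddComponentVerts G (P ∪ Q) = oddComponentVerts G P ∪ oddComponentVerts G Q := by
    ext K
    simp only [oddComponentVerts, Set.mem_union, Set.mem_ofPred_eq, isComponentOf_union_iff hadj]
    tauto
  rw [hunion, Set.ncard_union_eq _ (Set.toFinite _) (Set.toFinite _)]
  refine Set.disjoint_left.2 ?_
  rintro K ⟨hKP, -⟩ ⟨hKQ, -⟩
  obtain ⟨v, hv⟩ := hKP.nonempty
  exact Set.disjoint_left.1 hPQ (hKP.subset hv) (hKQ.subset hv)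

lemma qG_eq_add_qG_induce [Finite V] {X Z E : Set V}
    (hsep : ∀ u ∈ Xᶜ \ E, ∀ w ∈ E ∩ Xᶜ, ¬ G.Adj u w) (hXZ : X ⊆ Z) (hZX : Z \ E ⊆ X) :
    qG G Z = (oddComponentVerts G (Xᶜ \ E)).ncard + qG (G.induce E) (Subtype.val ⁻¹' Z) := by
  have hZc : Zᶜ = (Xᶜ \ E) ∪ (E ∩ Zᶜ) := by
    ext v
    by_cases hvE : v ∈ E
    · simp [hvE]
    · have : v ∈ Z ↔ v ∈ X := ⟨fun hvZ => hZX ⟨hvZ, hvE⟩, fun hvX => hXZ hvX⟩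
      simp [hvE, this]
  rw [qG_eq_ncard_oddComponentVerts, qG_induce_preimage]
  conv_lhs => rw [hZc]
  refine ncard_oddComponentVerts_union
    (Set.disjoint_left.2 fun v (hv : v ∈ Xᶜ \ E) (hv' : v ∈ E ∩ Zᶜ) => hv.2 hv'.1) ?_
  exact fun u hu w hw => hsep u hu w ⟨hw.1, fun hwX => hw.2 (hXZ hwX)⟩

lemma ncard_eq_ncard_diff_add_ncard_preimage [Finite V] (S E : Set V) :
    S.ncard = (S \ E).ncard + (Subtype.val ⁻¹' S : Set E).ncard := by
  rw [← Set.ncard_image_of_injective _ Subtype.val_injective, Subtype.image_preimage_coe,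
    Set.inter_comm, add_comm, Set.ncard_inter_add_ncard_sdiff_eq_ncard]

theorem IsBarrier.of_isBarrier_induce [Finite V] {X Z E : Set V} (hX : IsBarrier G X)
    (hXE : IsBarrier (G.induce E) (Subtype.val ⁻¹' X))
    (hZE : IsBarrier (G.induce E) (Subtype.val ⁻¹' Z))
    (hsep : ∀ u ∈ Xᶜ \ E, ∀ w ∈ E ∩ Xᶜ, ¬ G.Adj u w) (hXZ : X ⊆ Z) (hZX : Z \ E ⊆ X) :
    IsBarrier G Z := by
  have hqZ := qG_eq_add_qG_induce hsep hXZ hZX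
  have hqX := qG_eq_add_qG_induce (Z := X) hsep subset_rfl Set.sdiff_subset
  have hdiff : Z \ E = X \ E := subset_antisymm (fun v hv => ⟨hZX hv, hv.2⟩)
    (Set.sdiff_subset_sdiff_left hXZ)
  have hZ := ncard_eq_ncard_diff_add_ncard_preimage Z E
  have hX' := ncard_eq_ncard_diff_add_ncard_preimage X E
  unfold IsBarrier at *
  rw [hdiff] at hZ
  omega

end OddComponents

section HGraph

variable {V : Type*} {G : SimpleGraph V} {X : Set V}

lemma exists_mem_componentVerts_iff {A : Set V} {c : (G.induce A).ConnectedComponent}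
    {P : V → Prop} :
    (∃ y ∈ componentVerts c, P y) ↔ ∃ y : A, (G.induce A).connectedComponentMk y = c ∧ P y := by
  simp [mem_componentVerts]

lemma hGraph_adj_inl_inr {x : X} {k : OddCompT G X} :
    (HGraph G X).Adj (.inl x) (.inr k) ↔ ∃ y ∈ componentVerts k.1, G.Adj x y := by
  rw [HGraph, fromRel_adj, exists_mem_componentVerts_iff]
  constructor
  · rintro ⟨-, ⟨x', k', y, ⟨⟩, ⟨⟩, hy, hadj⟩ | ⟨x', k', y, ⟨⟩, -⟩⟩
    exact ⟨y, hy, hadj⟩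
  · rintro ⟨y, hy, hadj⟩
    exact ⟨Sum.inl_ne_inr, Or.inl ⟨x, k, y, rfl, rfl, hy, hadj⟩⟩

lemma not_hGraph_adj_inl_inl (x x' : X) : ¬ (HGraph G X).Adj (.inl x) (.inl x') := by
  simp [HGraph]

lemma not_hGraph_adj_inr_inr (k k' : OddCompT G X) : ¬ (HGraph G X).Adj (.inr k) (.inr k') := by
  simp [HGraph]

end HGraph

section Barrier

variable {V : Type*} {G : SimpleGraph V} {X : Set V} {M : G.Subgraph}

theorem IsBarrier.exists_matchingEquiv [Finite V] (hB : IsBarrier G X)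
    (hM : M.IsPerfectMatching) :
    ∃ e : X ≃ OddCompT G X, ∀ (x : X) k, (∃ y ∈ componentVerts k.1, M.Adj x y) ↔ e x = k := by
  refine exists_equiv_iff_of_card_eq ?_ (fun k => ?_) ?_
  · exact (Nat.card_coe_set_eq _).trans (hB.trans (Nat.card_coe_set_eq X).symm)
  · obtain ⟨a, ha, b, hb, hab⟩ := hM.exists_adj_notMem_of_odd_ncard
      (A := componentVerts k.1) (by rw [ncard_componentVerts]; exact k.2)
    have hbX : b ∈ X := by_contra fun hbX => hb (mem_componentVerts_of_adj ha hbX (M.adj_sub hab))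
    exact ⟨⟨b, hbX⟩, a, ha, hab.symm⟩
  · rintro x k k' ⟨y, hy, hxy⟩ ⟨y', hy', hxy'⟩
    obtain rfl := hM.1.eq_of_adj_left hxy hxy'
    obtain ⟨_, hk⟩ := mem_componentVerts.1 hy
    obtain ⟨_, hk'⟩ := mem_componentVerts.1 hy'
    exact Subtype.ext (hk.symm.trans hk')

def projMatching (G : SimpleGraph V) (X : Set V) (M : G.Subgraph) : (HGraph G X).Subgraph where
  verts := Set.univ
  Adj p q := s(p, q) ∈ projEdges G X M
  adj_sub := by
    rintro p q ⟨x, k, y, hy, hxy, he⟩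
    have hadj : (HGraph G X).Adj (.inl x) (.inr k) :=
      hGraph_adj_inl_inr.2 ⟨y, mem_componentVerts.2 ⟨y.2, hy⟩, M.adj_sub hxy⟩
    rcases Sym2.eq_iff.1 he with ⟨rfl, rfl⟩ | ⟨rfl, rfl⟩
    exacts [hadj, hadj.symm]
  edge_vert _ := Set.mem_univ _
  symm := ⟨fun _ _ h => by rwa [Sym2.eq_swap]⟩

lemma projMatching_adj_inl_inr {x : X} {k : OddCompT G X} :
    (projMatching G X M).Adj (.inl x) (.inr k) ↔ ∃ y ∈ componentVerts k.1, M.Adj x y := by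
  change s(_, _) ∈ projEdges G X M ↔ _
  rw [exists_mem_componentVerts_iff]
  constructor
  · rintro ⟨x', k', y, hy, hxy, he⟩
    rcases Sym2.eq_iff.1 he with ⟨⟨⟩, ⟨⟩⟩ | ⟨⟨⟩, -⟩
    exact ⟨y, hy, hxy⟩
  · rintro ⟨y, hy, hxy⟩
    exact ⟨x, k, y, hy, hxy, rfl⟩

theorem IsBarrier.projMatching_isPerfectMatching [Finite V] (hB : IsBarrier G X)
    (hM : M.IsPerfectMatching) : (projMatching G X M).IsPerfectMatching := by
  obtain ⟨e, he⟩ := hB.exists_matchingEquiv hM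
  have hadj : ∀ x k, (projMatching G X M).Adj (.inl x) (.inr k) ↔ e x = k :=
    fun x k => projMatching_adj_inl_inr.trans (he x k)
  refine Subgraph.isPerfectMatching_iff.2 fun p => ?_
  rcases p with x | k
  · refine ⟨.inr (e x), (hadj x _).2 rfl, ?_⟩
    rintro (x' | k') h
    · exact absurd (Subgraph.adj_sub _ h) (not_hGraph_adj_inl_inl _ _)
    · rw [(hadj x k').1 h]
  · refine ⟨.inl (e.symm k), ((hadj _ k).2 (e.apply_symm_apply k)).symm, ?_⟩
    rintro (x' | k') h
    · exact congrArg _ (e.eq_symm_apply.2 ((hadj x' k).1 h.symm))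
    · exact absurd (Subgraph.adj_sub _ h) (not_hGraph_adj_inr_inr _ _)

theorem IsBarrier.exists_allowed_adj_of_matched [Finite V] (hB : IsBarrier G X)
    (hM : M.IsPerfectMatching) {x y : V} (hx : x ∈ X) (hxy : M.Adj x y) :
    ∃ k : OddCompT G X, y ∈ componentVerts k.1 ∧
      (allowedSubgraph (HGraph G X)).Adj (.inl ⟨x, hx⟩) (.inr k) := by
  obtain ⟨e, he⟩ := hB.exists_matchingEquiv hM
  obtain ⟨y', hy', hxy'⟩ := (he ⟨x, hx⟩ _).2 rfl
  obtain rfl := hM.1.eq_of_adj_left hxy hxy'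
  exact ⟨_, hy', (hB.projMatching_isPerfectMatching hM).allowedSubgraph_adj
    (projMatching_adj_inl_inr.2 ⟨y, hy', hxy⟩)⟩

theorem IsBarrier.card_inl_eq_card_inr [Finite V] (hB : IsBarrier G X) (hG : Factorizable G)
    (c : (allowedSubgraph (HGraph G X)).ConnectedComponent) :
    Nat.card {x : X // .inl x ∈ c.supp} = Nat.card {k : OddCompT G X // .inr k ∈ c.supp} := by
  obtain ⟨M, hM⟩ := hG
  obtain ⟨e, he⟩ := hB.exists_matchingEquiv hM
  refine Nat.card_congr (e.subtypeEquiv fun x => c.mem_supp_congr_adj ?_)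
  exact (hB.projMatching_isPerfectMatching hM).allowedSubgraph_adj
    (projMatching_adj_inl_inr.2 ((he x _).2 rfl))

end Barrier

section Expansion

variable {V : Type*} {G : SimpleGraph V} {X : Set V}

lemma projV_of_mem {v : V} (hv : v ∈ X) : projV G X v = some (.inl ⟨v, hv⟩) := by
  simp [projV, hv]

lemma projV_of_mem_componentVerts {k : OddCompT G X} {v : V} (hv : v ∈ componentVerts k.1) :
    projV G X v = some (.inr k) := by
  obtain ⟨hvX, hk⟩ := mem_componentVerts.1 hv
  have hvX' : v ∉ X := hvX
  simp [projV, hvX', hk, k.2]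

lemma projV_eq_of_adj {u w : V} (hu : u ∉ X) (hw : w ∉ X) (h : G.Adj u w) :
    projV G X u = projV G X w := by
  have hc : (G.induce Xᶜ).connectedComponentMk ⟨u, hu⟩ =
      (G.induce Xᶜ).connectedComponentMk ⟨w, hw⟩ :=
    ConnectedComponent.connectedComponentMk_eq_of_adj
      (show (G.induce Xᶜ).Adj ⟨u, hu⟩ ⟨w, hw⟩ from h)
  simp [projV, hu, hw, hc]

variable {c : (allowedSubgraph (HGraph G X)).ConnectedComponent}

lemma mem_expansionVerts_iff {v : V} :
    v ∈ expansionVerts G X c ↔ ∃ p ∈ c.supp, projV G X v = some p := by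
  by_cases hv : v ∈ X <;> simp [expansionVerts, projV, hv]

lemma mem_expansionVerts_iff_of_mem {v : V} (hv : v ∈ X) :
    v ∈ expansionVerts G X c ↔ .inl ⟨v, hv⟩ ∈ c.supp := by
  simp [mem_expansionVerts_iff, projV_of_mem hv]

lemma expansionVerts_subset : expansionVerts G X c ⊆ X ∪ DX G X := by
  rintro v (⟨h, -⟩ | ⟨h, ho, -⟩)
  exacts [Or.inl h, Or.inr ⟨h, ho⟩]

lemma disjoint_expansionVerts {c₁ c₂ : (allowedSubgraph (HGraph G X)).ConnectedComponent}
    (h : c₁ ≠ c₂) : Disjoint (expansionVerts G X c₁) (expansionVerts G X c₂) := by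
  refine Set.disjoint_left.2 fun v hv₁ hv₂ => h ?_
  obtain ⟨p, hp, hvp⟩ := mem_expansionVerts_iff.1 hv₁
  obtain ⟨q, hq, hvq⟩ := mem_expansionVerts_iff.1 hv₂
  obtain rfl := Option.some.inj (hvp.symm.trans hvq)
  exact hp.symm.trans hq

lemma iUnion_expansionVerts : ⋃ c, expansionVerts G X c = X ∪ DX G X := by
  refine subset_antisymm (Set.iUnion_subset fun c => expansionVerts_subset) fun v hv => ?_
  obtain ⟨p, hp⟩ : ∃ p, projV G X v = some p := by
    rcases hv with hv | ⟨hvX, ho⟩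
    · exact ⟨_, projV_of_mem hv⟩
    · exact ⟨_, projV_of_mem_componentVerts (k := ⟨_, ho⟩) (mem_componentVerts.2 ⟨hvX, rfl⟩)⟩
  exact Set.mem_iUnion.2 ⟨_, mem_expansionVerts_iff.2 ⟨p, rfl, hp⟩⟩

end Expansion

section Transport

variable {V : Type*} [Finite V] {G : SimpleGraph V} {X : Set V}

theorem IsBarrier.exists_reachable_projV_of_allowed (hB : IsBarrier G X) {a b : V}
    (hab : (allowedSubgraph G).Adj a b) {p : HVert G X} (ha : projV G X a = some p) :
    ∃ q, projV G X b = some q ∧ (allowedSubgraph (HGraph G X)).Reachable p q := by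
  rw [allowedSubgraph, fromEdgeSet_adj] at hab
  obtain ⟨⟨hGab, M, hM, hMab⟩, -⟩ := hab
  rw [Subgraph.mem_edgeSet] at hMab
  by_cases haX : a ∈ X
  · obtain ⟨k, hbk, hadj⟩ := hB.exists_allowed_adj_of_matched hM haX hMab
    obtain rfl := Option.some.inj ((projV_of_mem haX).symm.trans ha)
    exact ⟨_, projV_of_mem_componentVerts hbk, hadj.reachable⟩
  by_cases hbX : b ∈ X
  · obtain ⟨k, hak, hadj⟩ := hB.exists_allowed_adj_of_matched hM hbX hMab.symm
    obtain rfl := Option.some.inj ((projV_of_mem_componentVerts hak).symm.trans ha)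
    exact ⟨_, projV_of_mem hbX, hadj.reachable.symm⟩
  · exact ⟨p, (projV_eq_of_adj haX hbX hGab).symm.trans ha, Reachable.refl _⟩

theorem IsBarrier.exists_reachable_projV_of_sameFC (hB : IsBarrier G X) {a b : V}
    (hab : SameFC G a b) {p : HVert G X} (ha : projV G X a = some p) :
    ∃ q, projV G X b = some q ∧ (allowedSubgraph (HGraph G X)).Reachable p q := by
  obtain ⟨w⟩ := hab
  induction w generalizing p with
  | nil => exact ⟨p, ha, Reachable.refl _⟩
  | cons hadj _ ih =>
    obtain ⟨q, hq, hpq⟩ := hB.exists_reachable_projV_of_allowed hadj ha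
    obtain ⟨r, hr, hqr⟩ := ih hq
    exact ⟨r, hr, hpq.trans hqr⟩

variable {c : (allowedSubgraph (HGraph G X)).ConnectedComponent}

theorem IsBarrier.mem_expansionVerts_of_sameFC (hB : IsBarrier G X) {v w : V}
    (hv : v ∈ expansionVerts G X c) (hvw : SameFC G v w) : w ∈ expansionVerts G X c := by
  rw [mem_expansionVerts_iff] at hv ⊢
  obtain ⟨p, hp, hvp⟩ := hv
  obtain ⟨q, hwq, hpq⟩ := hB.exists_reachable_projV_of_sameFC hvw hvp
  exact ⟨q, (ConnectedComponent.sound hpq).symm.trans hp, hwq⟩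

theorem IsBarrier.isSeparating_expansionVerts (hB : IsBarrier G X) :
    IsSeparating G (expansionVerts G X c) := by
  rintro C ⟨v, rfl⟩
  refine or_iff_not_imp_right.2 fun h => ?_
  obtain ⟨w, hvw, hw⟩ := Set.not_disjoint_iff.1 h
  exact fun u hvu => hB.mem_expansionVerts_of_sameFC hw (Reachable.trans (Reachable.symm hvw) hvu)

theorem IsBarrier.factorizable_induce_expansionVerts (hB : IsBarrier G X) (hG : Factorizable G) :
    Factorizable (G.induce (expansionVerts G X c)) := by
  obtain ⟨M, hM⟩ := hG
  exact hM.factorizable_induce fun v hv w hvw =>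
    hB.mem_expansionVerts_of_sameFC hv (hM.allowedSubgraph_adj hvw).reachable

end Transport

section ExpansionComponents

variable {V : Type*} {G : SimpleGraph V} {X : Set V}
  {c : (allowedSubgraph (HGraph G X)).ConnectedComponent}

lemma mem_expansionVerts_of_adj {u w : V} (hu : u ∈ expansionVerts G X c) (huX : u ∉ X)
    (hwX : w ∉ X) (h : G.Adj u w) : w ∈ expansionVerts G X c := by
  rw [mem_expansionVerts_iff] at hu ⊢
  rwa [← projV_eq_of_adj huX hwX h]

lemma componentVerts_subset_expansionVerts_iff (k : OddCompT G X) :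
    componentVerts k.1 ⊆ expansionVerts G X c ↔ .inr k ∈ c.supp := by
  constructor
  · intro h
    obtain ⟨v, hv⟩ : (componentVerts k.1).Nonempty := k.1.nonempty_supp.image _
    obtain ⟨p, hp, hvp⟩ := mem_expansionVerts_iff.1 (h hv)
    obtain rfl := Option.some.inj ((projV_of_mem_componentVerts hv).symm.trans hvp)
    exact hp
  · exact fun hk v hv => mem_expansionVerts_iff.2 ⟨_, hk, projV_of_mem_componentVerts hv⟩

lemma range_componentVerts_expansionVerts :
    Set.range (fun k : {k : OddCompT G X // .inr k ∈ c.supp} => componentVerts k.1.1) =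
      oddComponentVerts G (expansionVerts G X c ∩ Xᶜ) := by
  have hcl : ∀ u ∈ expansionVerts G X c ∩ Xᶜ, ∀ w ∈ Xᶜ, G.Adj u w →
      w ∈ expansionVerts G X c ∩ Xᶜ :=
    fun u hu w hw h => ⟨mem_expansionVerts_of_adj hu.1 hu.2 hw h, hw⟩
  ext K
  simp only [oddComponentVerts, Set.mem_ofPred_eq, Set.mem_range,
    isComponentOf_iff_of_closed Set.inter_subset_right hcl]
  constructor
  · rintro ⟨⟨k, hk⟩, rfl⟩
    refine ⟨⟨isComponentOf_iff_mem_range.2 ⟨k.1, rfl⟩, Set.subset_inter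
      ((componentVerts_subset_expansionVerts_iff k).2 hk) (componentVerts_subset _)⟩, ?_⟩
    rw [ncard_componentVerts]
    exact k.2
  · rintro ⟨⟨hK, hKE⟩, hodd⟩
    obtain ⟨d, rfl⟩ := isComponentOf_iff_mem_range.1 hK
    rw [ncard_componentVerts] at hodd
    exact ⟨⟨⟨d, hodd⟩, (componentVerts_subset_expansionVerts_iff ⟨d, hodd⟩).1
      (hKE.trans Set.inter_subset_left)⟩, rfl⟩

lemma exists_oddCompT_induce_expansionVerts_equiv :
    ∃ Θ : OddCompT (G.induce (expansionVerts G X c)) (Subtype.val ⁻¹' X) ≃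
        {k : OddCompT G X // .inr k ∈ c.supp},
      ∀ d, componentVerts (Θ d).1.1 = Subtype.val '' componentVerts d.1 :=
  exists_equiv_of_range_eq
    ((Set.image_injective.2 Subtype.val_injective).comp
      (componentVerts_injective.comp Subtype.val_injective))
    (componentVerts_injective.comp (Subtype.val_injective.comp Subtype.val_injective))
    ((range_image_componentVerts_oddCompT_induce _ _).trans
      range_componentVerts_expansionVerts.symm)

variable (c) in
def expansionInlEquiv :
    {x : X // .inl x ∈ c.supp} ≃ (Subtype.val ⁻¹' X : Set (expansionVerts G X c)) where
  toFun x := ⟨⟨x.1, (mem_expansionVerts_iff_of_mem x.1.2).2 x.2⟩, x.1.2⟩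
  invFun x := ⟨⟨x.1.1, x.2⟩, (mem_expansionVerts_iff_of_mem (c := c) x.2).1 x.1.2⟩
  left_inv _ := rfl
  right_inv _ := rfl

theorem IsBarrier.isBarrier_induce_expansionVerts [Finite V] (hB : IsBarrier G X)
    (hG : Factorizable G) : IsBarrier (G.induce (expansionVerts G X c)) (Subtype.val ⁻¹' X) := by
  obtain ⟨Θ, -⟩ := exists_oddCompT_induce_expansionVerts_equiv (c := c)
  calc qG _ _ = Nat.card (OddCompT (G.induce (expansionVerts G X c)) (Subtype.val ⁻¹' X)) :=
        (Nat.card_coe_set_eq _).symm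
    _ = Nat.card {k : OddCompT G X // .inr k ∈ c.supp} := Nat.card_congr Θ
    _ = Nat.card {x : X // .inl x ∈ c.supp} := (hB.card_inl_eq_card_inr hG c).symm
    _ = _ := (Nat.card_congr (expansionInlEquiv c)).trans (Nat.card_coe_set_eq _)

theorem IsOddMaximalBarrier.induce_expansionVerts [Finite V] (hX : IsOddMaximalBarrier G X)
    (hG : Factorizable G) :
    IsOddMaximalBarrier (G.induce (expansionVerts G X c)) (Subtype.val ⁻¹' X) := by
  have hXE := hX.1.isBarrier_induce_expansionVerts hG (c := c)
  refine ⟨hXE, fun Y' hY' hY'ne hY'bar => ?_⟩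
  have hYE : Subtype.val '' Y' ⊆ expansionVerts G X c ∩ Xᶜ := by
    rintro _ ⟨v, hv, rfl⟩
    exact ⟨v.2, (hY' hv).1⟩
  refine hX.2 (Subtype.val '' Y')
    (fun v hv => (expansionVerts_subset (hYE hv).1).resolve_left (hYE hv).2) (hY'ne.image _) ?_
  refine hX.1.of_isBarrier_induce hXE ?_
    (fun u hu w hw h => hu.2 (mem_expansionVerts_of_adj hw.1 hw.2 hu.1 h.symm))
    Set.subset_union_left ?_
  · rwa [Set.preimage_union, Set.preimage_image_eq _ Subtype.val_injective]
  · rintro v ⟨hv | hv, hvE⟩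
    exacts [hv, absurd (hYE hv).1 hvE]

theorem nonempty_hGraph_induce_expansionVerts_iso :
    Nonempty (HGraph (G.induce (expansionVerts G X c)) (Subtype.val ⁻¹' X) ≃g
      (HGraph G X).induce c.supp) := by
  obtain ⟨Θ, hΘ⟩ := exists_oddCompT_induce_expansionVerts_equiv (c := c)
  let e := (Equiv.sumCongr (expansionInlEquiv c).symm Θ).trans Equiv.subtypeSum.symm
  have hinl_inr : ∀ x d, (HGraph G X).Adj (e (.inl x)).1 (e (.inr d)).1 ↔
      (HGraph (G.induce (expansionVerts G X c)) (Subtype.val ⁻¹' X)).Adj (.inl x) (.inr d) := by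
    intro x d
    change (HGraph G X).Adj (.inl ⟨x.1.1, x.2⟩) (.inr (Θ d).1) ↔ _
    rw [hGraph_adj_inl_inr, hGraph_adj_inl_inr, hΘ, Set.exists_mem_image]
    rfl
  refine ⟨⟨e, fun {p q} => ?_⟩⟩
  rw [induce_adj]
  rcases p with x | d <;> rcases q with x' | d'
  · exact iff_of_false (not_hGraph_adj_inl_inl _ _) (not_hGraph_adj_inl_inl _ _)
  · exact hinl_inr x d'
  · rw [adj_comm (HGraph G X), adj_comm (HGraph (G.induce _) _)]
    exact hinl_inr x' d
  · exact iff_of_false (not_hGraph_adj_inr_inr _ _) (not_hGraph_adj_inr_inr _ _)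

end ExpansionComponents

theorem stmt7 {V : Type*} [Fintype V] (G : SimpleGraph V) (hG : Factorizable G)
    (X : Set V) (hX : IsOddMaximalBarrier G X) :
    (∀ c₁ c₂ : (allowedSubgraph (HGraph G X)).ConnectedComponent, c₁ ≠ c₂ →
      Disjoint (expansionVerts G X c₁) (expansionVerts G X c₂)) ∧
    (⋃ c : (allowedSubgraph (HGraph G X)).ConnectedComponent,
      expansionVerts G X c) = X ∪ DX G X ∧
    (∀ c : (allowedSubgraph (HGraph G X)).ConnectedComponent,
      IsSeparating G (expansionVerts G X c) ∧
      Factorizable (G.induce (expansionVerts G X c))) ∧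
    (∀ c : (allowedSubgraph (HGraph G X)).ConnectedComponent,
      IsOddMaximalBarrier (G.induce (expansionVerts G X c))
        (Subtype.val ⁻¹' X)) ∧
    (∀ c : (allowedSubgraph (HGraph G X)).ConnectedComponent,
      Nonempty
        ((HGraph (G.induce (expansionVerts G X c)) (Subtype.val ⁻¹' X)) ≃g
          ((HGraph G X).induce c.supp))) :=
  ⟨fun _ _ => disjoint_expansionVerts, iUnion_expansionVerts,
    fun _ => ⟨hX.1.isSeparating_expansionVerts, hX.1.factorizable_induce_expansionVerts hG⟩,
    fun _ => hX.induce_expansionVerts hG, fun _ => nonempty_hGraph_induce_expansionVerts_iso⟩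
end

section
/- Let G be a factorizable graph, M a perfect matching of G, H a factor-component of G, and S ∈ P_G(H). Then for any x ∈ V↑*(S), there is an M-balanced path from x to some vertex y ∈ S all of whose vertices except y are contained in V↑(S). -/
open SimpleGraph

/-!
If `x ∈ V↑(S)`, then `x` lies in a factor-component above `H`, so some critical-inducing set `X`
for `H` contains `x`. The matching `M` uses only allowed edges, so it restricts to a perfect
matching of `X \ V(H)`, while factor-criticality of `G[X]/H` gives a perfect matching of
`G[X]/H - x`. Their symmetric difference contains an alternating path from `x` to the contracted
vertex, which lifts to an `M`-balanced path of `G` from `x` through `X \ V(H)` to some `y ∈ V(H)`.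
All vertices of `X \ V(H)` lie in factor-components above `H`, so the path minus `y` stays in the
component `K` of `G[V↑(H)]` containing `x`; as `y` is adjacent to `K`, it belongs to `S`.
-/

section Development

variable {V W : Type*} {G : SimpleGraph V}

lemma isAltList_nil (F : Set (Sym2 W)) : IsAltList F [] :=
  fun _ h => absurd h (Nat.not_lt_zero _)

lemma isAltList_cons_cons {F : Set (Sym2 W)} {e₀ e₁ : Sym2 W} {l : List (Sym2 W)} :
    IsAltList F (e₀ :: e₁ :: l) ↔ e₀ ∈ F ∧ e₁ ∉ F ∧ IsAltList F l := by
  refine ⟨fun h => ⟨by simpa using h 0 (by simp), by simpa using h 1 (by simp), fun i hi => ?_⟩,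
    fun ⟨h₀, h₁, h⟩ i hi => ?_⟩
  · simpa [Nat.even_add] using h (i + 2) (by simpa using hi)
  · match i with
    | 0 => simpa using h₀
    | 1 => simpa using h₁
    | i + 2 => simpa [Nat.even_add] using h i (by simpa using hi)

lemma IsAltList.of_map {W' : Type*} {F : Set (Sym2 W)} {F' : Set (Sym2 W')}
    {g : Sym2 W → Sym2 W'} {l : List (Sym2 W)} (hF : ∀ e ∈ l, e ∈ F ↔ g e ∈ F')
    (h : IsAltList F' (l.map g)) : IsAltList F l := fun i hi => by
  rw [hF _ (List.get_mem _ _)]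
  simpa using h i (by simpa using hi)

lemma IsAltList.of_deleteVerts {H : SimpleGraph W} {M : H.Subgraph} {s : Set W} {a b : W}
    {p : H.Walk a b} (hs : ∀ z ∈ p.support, z ∉ s)
    (h : IsAltList (M.deleteVerts s).edgeSet p.edges) : IsAltList M.edgeSet p.edges := by
  refine IsAltList.of_map (g := id) (fun e he => ?_) (by rwa [List.map_id])
  induction e using Sym2.ind with
  | _ x y =>
    have hx := hs x (p.fst_mem_support_of_mem_edges he)
    have hy := hs y (p.snd_mem_support_of_mem_edges he)
    simp only [id, Subgraph.mem_edgeSet, Subgraph.deleteVerts_adj]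
    exact ⟨fun h => ⟨M.edge_vert h, hx, M.edge_vert h.symm, hy, h⟩, fun h => h.2.2.2.2⟩

namespace SimpleGraph.Subgraph

variable {H : SimpleGraph W}

lemma IsMatching.deleteVerts_pair {M : H.Subgraph} (hM : M.IsMatching) {a b : W}
    (hab : M.Adj a b) : (M.deleteVerts {a, b}).IsMatching := by
  rintro v ⟨hv, hvab⟩
  obtain ⟨w, hvw, huniq⟩ := hM hv
  have hwab : w ∉ ({a, b} : Set W) := by
    rintro (rfl | rfl)
    · exact hvab (Or.inr (hM.eq_of_adj_left hvw.symm hab))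
    · exact hvab (Or.inl (hM.eq_of_adj_right hvw hab))
  exact ⟨w, deleteVerts_adj.mpr ⟨hv, hvab, M.edge_vert hvw.symm, hwab, hvw⟩,
    fun w' h => huniq w' (deleteVerts_adj.mp h).2.2.2.2⟩

/-- Follow the `M₁`-edge of `u` to `u₁` and the `M₂`-edge of `u₁` to `u₂`; unless `u₂ = v`, the
hypotheses hold again for `u₂` and the two matchings with these edges deleted. -/
theorem IsMatching.exists_alternating_path [Finite W] {M₁ M₂ : H.Subgraph}
    (h₁ : M₁.IsMatching) (h₂ : M₂.IsMatching) {u v : W}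
    (huM₁ : u ∈ M₁.verts) (huM₂ : u ∉ M₂.verts) (hvM₁ : v ∉ M₁.verts)
    (hcov : ∀ w, w ≠ u → w ≠ v → (w ∈ M₁.verts ↔ w ∈ M₂.verts)) :
    ∃ p : H.Walk u v, p.IsPath ∧ Even p.length ∧ IsAltList M₁.edgeSet p.edges ∧
      ∀ z ∈ p.support, z ≠ v → z ∈ M₁.verts := by
  induction hn : M₁.verts.ncard using Nat.strong_induction_on generalizing M₁ M₂ u with
  | _ n ih =>
  obtain ⟨u₁, huu₁, -⟩ := h₁ huM₁
  have huv : u ≠ v := fun h => hvM₁ (h ▸ huM₁)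
  have hu₁v : u₁ ≠ v := fun h => hvM₁ (h ▸ M₁.edge_vert huu₁.symm)
  obtain ⟨u₂, hu₁u₂, -⟩ := h₂ ((hcov u₁ huu₁.ne.symm hu₁v).mp (M₁.edge_vert huu₁.symm))
  have hu₂u : u₂ ≠ u := fun h => huM₂ (h ▸ M₂.edge_vert hu₁u₂.symm)
  have hu₂u₁ : u₂ ≠ u₁ := hu₁u₂.ne.symm
  obtain ⟨p, hp, hpeven, hpalt, hpcov⟩ : ∃ p : H.Walk u₂ v, p.IsPath ∧ Even p.length ∧
      IsAltList M₁.edgeSet p.edges ∧ ∀ z ∈ p.support, z ≠ v → z ∈ M₁.verts \ {u, u₁} := by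
    by_cases hu₂v : u₂ = v
    · subst hu₂v
      exact ⟨.nil, by simp, by simp, isAltList_nil _, by simp⟩
    have hlt : (M₁.deleteVerts {u, u₁}).verts.ncard < n := hn ▸ Set.ncard_lt_ncard
      (Set.sdiff_ssubset_left_iff.mpr ⟨u, huM₁, by simp⟩) (Set.toFinite _)
    have hu₂M₁ : u₂ ∈ M₁.verts := (hcov u₂ hu₂u hu₂v).mpr (M₂.edge_vert hu₁u₂.symm)
    obtain ⟨p, hp, hpeven, hpalt, hpcov⟩ := ih _ hlt (h₁.deleteVerts_pair huu₁)
      (h₂.deleteVerts_pair hu₁u₂) (u := u₂) ⟨hu₂M₁, by simp [hu₂u, hu₂u₁]⟩ (by simp)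
      (fun h => hvM₁ h.1) (fun w hwu₂ hwv => by
        by_cases hwu : w = u
        · simp [hwu, huM₂]
        by_cases hwu₁ : w = u₁
        · simp [hwu₁]
        simp [hwu, hwu₁, hwu₂, hcov w hwu hwv]) rfl
    refine ⟨p, hp, hpeven, hpalt.of_deleteVerts fun z hz => ?_, hpcov⟩
    rintro (rfl | rfl)
    exacts [(hpcov z hz huv).2 (by simp), (hpcov z hz hu₁v).2 (by simp)]
  have hu_p : u ∉ p.support := fun h => (hpcov u h huv).2 (by simp)
  have hu₁_p : u₁ ∉ p.support := fun h => (hpcov u₁ h hu₁v).2 (by simp)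
  refine ⟨.cons (M₁.adj_sub huu₁) (.cons (M₂.adj_sub hu₁u₂) p),
    (hp.cons hu₁_p).cons (by simp [huu₁.ne, hu_p]), by simpa [Nat.even_add_one] using hpeven,
    isAltList_cons_cons.mpr ⟨huu₁, fun h => hu₂u (h₁.eq_of_adj_left h huu₁.symm), hpalt⟩, ?_⟩
  simp only [Walk.support_cons, List.mem_cons]
  rintro z (rfl | rfl | hz) hzv
  exacts [huM₁, M₁.edge_vert huu₁.symm, (hpcov z hz hzv).1]

end SimpleGraph.Subgraph

lemma FactorCritical.exists_isMatching {H : SimpleGraph W} (h : FactorCritical H) (v : W) :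
    ∃ N : H.Subgraph, N.IsMatching ∧ N.verts = {w | w ≠ v} := by
  obtain ⟨N, hN⟩ := h v
  refine ⟨N.map (Embedding.induce _).toHom, hN.1.map _ Subtype.val_injective, ?_⟩
  ext w
  simp [hN.2.verts_eq_univ]

def factorComponent (G : SimpleGraph V) (v : V) : Set V := {w | SameFC G v w}

lemma mem_factorComponent_self (G : SimpleGraph V) (v : V) : v ∈ factorComponent G v :=
  Reachable.refl v

lemma IsFactorComponent.eq_factorComponent {C : Set V} (hC : IsFactorComponent G C) {z : V}
    (hz : z ∈ C) : C = factorComponent G z := by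
  obtain ⟨v, rfl⟩ := hC
  ext w
  exact ⟨fun h => Reachable.trans (Reachable.symm hz) h, fun h => Reachable.trans hz h⟩

lemma SimpleGraph.Subgraph.IsPerfectMatching.sameFC {M : G.Subgraph} (hM : M.IsPerfectMatching)
    {a b : V} (h : M.Adj a b) : SameFC G a b :=
  Adj.reachable (G := allowedSubgraph G) <| (fromEdgeSet_adj _).mpr
    ⟨⟨M.adj_sub h, M, hM, h⟩, (M.adj_sub h).ne⟩

lemma IsSeparating.factorComponent_subset {X : Set V} (hX : IsSeparating G X) {z : V}
    (hz : z ∈ X) : factorComponent G z ⊆ X :=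
  (hX _ ⟨z, rfl⟩).resolve_right fun h => Set.disjoint_left.mp h (mem_factorComponent_self G z) hz

lemma IsSeparating.mem_diff_of_sameFC {C X : Set V} (hC : IsFactorComponent G C)
    (hX : IsSeparating G X) {z w : V} (hz : z ∈ X \ C) (h : SameFC G z w) : w ∈ X \ C :=
  ⟨hX.factorComponent_subset hz.1 h, fun hw => hz.2 <| by
    rw [hC.eq_factorComponent hw]
    exact Reachable.symm h⟩

section Contraction

variable {X C : Set V}

open Classical in
/-- Every vertex outside `X \ C`, not only those of `C`, goes to the contracted vertex. -/
noncomputable def contractProj (X C : Set V) (v : V) : Option {x : V // x ∈ X \ C} :=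
  if h : v ∈ X \ C then some ⟨v, h⟩ else none

lemma contractProj_of_mem {v : V} (h : v ∈ X \ C) : contractProj X C v = some ⟨v, h⟩ :=
  dif_pos h

lemma contractProj_of_notMem {v : V} (h : v ∉ X \ C) : contractProj X C v = none :=
  dif_neg h

lemma contractSet_adj_some_some {a b : {x : V // x ∈ X \ C}} :
    (contractSet G X C).Adj (some a) (some b) ↔ a ≠ b ∧ G.Adj a b := by
  simp only [contractSet, fromRel_adj, ne_eq, Option.some.injEq]
  exact and_congr_right fun _ => or_iff_left_of_imp (fun h => h.symm)

lemma contractSet_adj_some_none {a : {x : V // x ∈ X \ C}} :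
    (contractSet G X C).Adj (some a) none ↔ ∃ c ∈ C ∩ X, G.Adj a c := by
  simp [contractSet, fromRel_adj]

theorem exists_walk_of_contractSet_path {a : {x : V // x ∈ X \ C}}
    (ph : (contractSet G X C).Walk (some a) none) (hph : ph.IsPath) :
    ∃ (k y : V) (q : G.Walk a k) (hky : G.Adj k y), y ∈ C ∧ (∀ z ∈ q.support, z ∈ X \ C) ∧
      ph.support = (q.concat hky).support.map (contractProj X C) ∧
      ph.edges = (q.concat hky).edges.map (Sym2.map (contractProj X C)) := by
  generalize hw₀ : some a = w₀ at ph hph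
  generalize hw₁ : (none : Option {x : V // x ∈ X \ C}) = w₁ at ph hph
  induction ph generalizing a with
  | nil => cases hw₀.trans hw₁.symm
  | @cons _ t _ h q ih =>
    subst hw₀ hw₁
    cases t with
    | none =>
      obtain rfl : q = .nil := (Walk.isPath_iff_nil.mp hph.of_cons).eq_nil
      obtain ⟨c, ⟨hc, -⟩, hac⟩ := contractSet_adj_some_none.mp h
      have hcD : c ∉ X \ C := fun h => h.2 hc
      refine ⟨a, c, .nil, hac, hc, fun z hz => by
        rw [Walk.support_nil, List.mem_singleton] at hz
        exact hz ▸ a.2, ?_, ?_⟩ <;>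
        simp [contractProj_of_mem a.2, contractProj_of_notMem hcD]
    | some b =>
      obtain ⟨k, y, q', hky, hyC, hq'D, hsupp, hedges⟩ := ih (a := b) rfl rfl hph.of_cons
      refine ⟨k, y, .cons (contractSet_adj_some_some.mp h).2 q', hky, hyC, ?_, ?_, ?_⟩
      · simpa only [Walk.support_cons, List.mem_cons, forall_eq_or_imp] using ⟨a.2, hq'D⟩
      · simp [hsupp, contractProj_of_mem a.2]
      · simp [hedges, contractProj_of_mem a.2, contractProj_of_mem b.2]

namespace SimpleGraph.Subgraph

def contractRestrict (M : G.Subgraph) (X C : Set V) : (contractSet G X C).Subgraph where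
  verts := {p | ∃ a b : {x : V // x ∈ X \ C}, p = some a ∧ M.Adj a b}
  Adj p q := ∃ a b : {x : V // x ∈ X \ C}, p = some a ∧ q = some b ∧ M.Adj a b
  adj_sub := by
    rintro _ _ ⟨a, b, rfl, rfl, h⟩
    exact contractSet_adj_some_some.mpr
      ⟨fun e => (M.adj_sub h).ne (congrArg Subtype.val e), M.adj_sub h⟩
  edge_vert := by
    rintro _ _ ⟨a, b, rfl, rfl, h⟩
    exact ⟨a, b, rfl, h⟩
  symm := ⟨fun _ _ ⟨a, b, ha, hb, h⟩ => ⟨b, a, hb, ha, h.symm⟩⟩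

lemma IsMatching.contractRestrict {M : G.Subgraph} (hM : M.IsMatching) :
    (M.contractRestrict X C).IsMatching := by
  rintro _ ⟨a, b, rfl, hab⟩
  refine ⟨some b, ⟨a, b, rfl, rfl, hab⟩, ?_⟩
  rintro _ ⟨a', b', ha', rfl, hab'⟩
  obtain rfl := Option.some_injective _ ha'
  exact congrArg some (Subtype.ext (hM.eq_of_adj_left hab' hab))

lemma mem_edgeSet_iff_contractRestrict {M : G.Subgraph}
    (hclosed : ∀ a b, a ∈ X \ C → M.Adj a b → b ∈ X \ C) {z z' : V} (hz : z ∈ X \ C) :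
    s(z, z') ∈ M.edgeSet ↔
      Sym2.map (contractProj X C) s(z, z') ∈ (M.contractRestrict X C).edgeSet := by
  rw [Sym2.map_mk, contractProj_of_mem hz, Subgraph.mem_edgeSet, Subgraph.mem_edgeSet]
  by_cases hz' : z' ∈ X \ C
  · rw [contractProj_of_mem hz']
    refine ⟨fun h => ⟨_, _, rfl, rfl, h⟩, ?_⟩
    rintro ⟨a, b, ⟨⟩, ⟨⟩, h⟩
    exact h
  · rw [contractProj_of_notMem hz']
    exact iff_of_false (fun h => hz' (hclosed _ _ hz h)) (by rintro ⟨a, b, -, ⟨⟩, -⟩)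

end SimpleGraph.Subgraph

theorem exists_balancedPath_of_factorCritical [Finite V] {M : G.Subgraph}
    (hM : M.IsPerfectMatching) (hC : IsFactorComponent G C) (hX : IsSeparating G X)
    (hcrit : FactorCritical (contractSet G X C)) {x : V} (hx : x ∈ X \ C) :
    ∃ (k y : V) (q : G.Walk x k) (hky : G.Adj k y), y ∈ C ∧ (∀ z ∈ q.support, z ∈ X \ C) ∧
      IsBalancedPath M.edgeSet (q.concat hky) := by
  have hclosed (a b : V) (ha : a ∈ X \ C) (h : M.Adj a b) : b ∈ X \ C :=
    hX.mem_diff_of_sameFC hC ha (hM.sameFC h)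
  have hM₁ : ∀ w, w ∈ (M.contractRestrict X C).verts ↔ w ≠ none := by
    rintro (_ | a)
    · exact iff_of_false (by rintro ⟨a, b, ⟨⟩, -⟩) (by simp)
    · obtain ⟨b, hab, -⟩ := hM.1 (hM.2 a)
      exact iff_of_true ⟨a, ⟨b, hclosed _ _ a.2 hab⟩, rfl, hab⟩ (by simp)
  obtain ⟨M₂, hM₂, hM₂v⟩ := hcrit.exists_isMatching (some ⟨x, hx⟩)
  obtain ⟨ph, hph, hpheven, hphalt, -⟩ :=
    hM.1.contractRestrict.exists_alternating_path hM₂ (u := some ⟨x, hx⟩) (v := none)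
      ((hM₁ _).mpr (by simp)) (by simp [hM₂v])
      (by simp [hM₁]) (fun w hwx hwn => by simp [hM₁, hM₂v, hwx, hwn])
  obtain ⟨k, y, q, hky, hyC, hqD, hsupp, hedges⟩ := exists_walk_of_contractSet_path ph hph
  refine ⟨k, y, q, hky, hyC, hqD, ?_, ?_, ?_⟩
  · rw [Walk.isPath_def]
    exact List.Nodup.of_map _ (hsupp ▸ hph.support_nodup)
  · rwa [← Walk.length_edges, ← List.length_map (Sym2.map (contractProj X C)), ← hedges,
      Walk.length_edges]
  · refine IsAltList.of_map (fun e he => ?_) (hedges ▸ hphalt)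
    rw [Walk.edges_concat, List.concat_eq_append, List.mem_append, List.mem_singleton] at he
    rcases he with he | rfl
    · induction e using Sym2.ind with
      | _ a b =>
        exact M.mem_edgeSet_iff_contractRestrict hclosed (hqD a (q.fst_mem_support_of_mem_edges he))
    · exact M.mem_edgeSet_iff_contractRestrict hclosed (hqD k q.end_mem_support)

end Contraction

lemma IsComponentOf.mem_of_adj {U K : Set V} (hK : IsComponentOf G U K) {a b : V} (ha : a ∈ K)
    (hb : b ∈ U) (hab : G.Adj a b) : b ∈ K := by
  obtain ⟨v, hv, rfl⟩ := hK
  obtain ⟨ha', hr⟩ := ha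
  exact ⟨hb, hr.trans (induce_adj.mpr hab : (G.induce U).Adj ⟨a, ha'⟩ ⟨b, hb⟩).reachable⟩

lemma IsComponentOf.support_subset {U K : Set V} (hK : IsComponentOf G U K) :
    ∀ {a b : V} (p : G.Walk a b), (∀ z ∈ p.support, z ∈ U) → a ∈ K → ∀ z ∈ p.support, z ∈ K
  | _, _, .nil, _, ha => by simpa using ha
  | _, _, .cons h p, hU, ha => by
    simp only [Walk.support_cons, List.mem_cons, forall_eq_or_imp] at hU ⊢
    exact ⟨ha, hK.support_subset p hU.2 (hK.mem_of_adj ha (hU.2 _ p.start_mem_support) h)⟩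

section CriticalInducing

variable {C C' X : Set V} (hX : CriticalInducing G C C' X)
include hX

lemma CriticalInducing.compOrder_factorComponent {z : V} (hz : z ∈ X) :
    compOrder G C (factorComponent G z) :=
  ⟨X, hX.1, Set.union_subset (Set.subset_union_left.trans hX.2.1)
    (hX.1.factorComponent_subset hz), hX.2.2⟩

lemma CriticalInducing.diff_subset_upStar : X \ C ⊆ upStar G C \ C :=
  fun z hz => ⟨⟨_, ⟨z, rfl⟩, hX.compOrder_factorComponent hz.1, mem_factorComponent_self G z⟩, hz.2⟩

/-- The witness is the factor-component of `z`, which lies in `K` because allowed edges never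
leave `X \ C`. -/
theorem CriticalInducing.mem_upOfClass (hC : IsFactorComponent G C) {K S : Set V}
    (hK : IsComponentOf G (upStar G C \ C) K) (hKS : ∀ w ∈ C, (∃ k ∈ K, G.Adj k w) → w ∈ S)
    {z : V} (hz : z ∈ X \ C) (hzK : z ∈ K) : z ∈ upOfClass G C S := by
  classical
  refine ⟨factorComponent G z, ⟨z, rfl⟩, fun h => hz.2 (h ▸ mem_factorComponent_self G z),
    hX.compOrder_factorComponent hz.1, mem_factorComponent_self G z, K, hK, ?_, hKS⟩
  rintro w ⟨p⟩
  have hle : allowedSubgraph G ≤ G := fun _ _ h => ((fromEdgeSet_adj _).mp h).1.1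
  refine hK.support_subset (p.mapLe hle) (fun v hv => ?_) hzK w (Walk.end_mem_support _)
  rw [Walk.support_mapLe_eq_support] at hv
  exact hX.diff_subset_upStar (hX.1.mem_diff_of_sameFC hC hz ⟨p.takeUntil v hv⟩)

end CriticalInducing

end Development

theorem stmt10_general {V : Type*} [Fintype V] (G : SimpleGraph V)
    (M : SimpleGraph.Subgraph G) (hM : M.IsPerfectMatching)
    (C S : Set V) (hC : IsFactorComponent G C)
    (x : V) (hx : x ∈ upStarOfClass G C S) :
    ∃ (y : V) (_ : y ∈ S) (p : G.Walk x y),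
      IsBalancedPath M.edgeSet p ∧
      ∀ z ∈ p.support, z ≠ y → z ∈ upOfClass G C S := by
  rcases hx with ⟨C', hC', hC'C, ⟨X, hX⟩, hxC', K, hK, hC'K, hKS⟩ | hxS
  · have hxX : x ∈ X \ C :=
      ⟨hX.2.1 (Or.inr hxC'), fun hxC => hC'C <| by
        rw [hC'.eq_factorComponent hxC', hC.eq_factorComponent hxC]⟩
    obtain ⟨k, y, q, hky, hyC, hqX, hbal⟩ :=
      exists_balancedPath_of_factorCritical hM hC hX.1 hX.2.2 hxX
    have hqK : ∀ z ∈ q.support, z ∈ K :=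
      hK.support_subset q (fun z hz => hX.diff_subset_upStar (hqX z hz)) (hC'K hxC')
    refine ⟨y, hKS y hyC ⟨k, hqK k q.end_mem_support, hky⟩, q.concat hky, hbal, fun z hz hzy => ?_⟩
    have hzq : z ∈ q.support := by simpa [hzy] using hz
    exact hX.mem_upOfClass hC hK hKS (hqX z hzq) (hqK z hzq)
  · exact ⟨x, hxS, .nil, ⟨.nil, by simp, isAltList_nil _⟩, by simp⟩

theorem stmt10 {V : Type*} [Fintype V] (G : SimpleGraph V)
    (M : SimpleGraph.Subgraph G) (hM : M.IsPerfectMatching)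
    (C S : Set V) (hC : IsFactorComponent G C) (hS : IsClassOf G C S)
    (x : V) (hx : x ∈ upStarOfClass G C S) :
    ∃ (y : V) (_ : y ∈ S) (p : G.Walk x y),
      IsBalancedPath M.edgeSet p ∧
      ∀ z ∈ p.support, z ≠ y → z ∈ upOfClass G C S :=
  stmt10_general G M hM C S hC x hx
end
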